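/- If f : [−1,1] → ℝ extends to a bounded analytic function on the Bernstein ρ-ellipse E_ρ (ρ > 1) with |f| ≤ M there, then its Chebyshev coefficients satisfy |a_k| ≤ 2M·ρ^{−k} for all k ≥ 1. -/

import Mathlib

open Polynomial Real Complex

/-- The (open) Bernstein ρ-ellipse: the image of the annulus
`ρ⁻¹ < |z| < ρ` under the Joukowski map `z ↦ (z + z⁻¹)/2`. -/
def bernsteinEllipse (ρ : ℝ) : Set ℂ :=
  (fun z : ℂ => (z + z⁻¹) / 2) '' {z : ℂ | ρ⁻¹ < ‖z‖ ∧ ‖z‖ < ρ}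

/-! Substituting `x = cos θ` turns `a_k` into `(2/π) Re ∫₀^π f(cos θ) cos kθ dθ`, and by
the symmetry `θ ↦ 2π - θ` this is `(1/π) Re ∫₀^{2π} F(e^{iθ}) e^{-ikθ} dθ` for
`F(z) = f((z + z⁻¹)/2)`, a Laurent coefficient of a function holomorphic on the annulus
`ρ⁻¹ < |z| < ρ`. By Cauchy's theorem the unit circle may be replaced by `|z| = r` for any
`1 < r < ρ`, where the integrand of `∮ F(z) z^{-k-1} dz` is at most `M r^{-k-1}`; letting
`r → ρ` gives the bound. -/

open Set Metric MeasureTheory intervalIntegral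

theorem integral_div_sqrt_one_sub_sq_eq_integral_comp_cos (h : ℝ → ℝ) :
    ∫ x in (-1 : ℝ)..1, h x / √(1 - x ^ 2) = ∫ θ in (0 : ℝ)..π, h (Real.cos θ) := by
  have himage : Real.cos '' Ioo 0 π = Ioo (-1) 1 := by
    simpa using Real.cosPartialHomeomorph.image_source_eq_target
  rw [integral_of_le (by norm_num), integral_of_le pi_pos.le, integral_Ioc_eq_integral_Ioo,
    integral_Ioc_eq_integral_Ioo, ← himage,
    integral_image_eq_integral_abs_deriv_smul measurableSet_Ioo
      (fun θ _ => (Real.hasDerivAt_cos θ).hasDerivWithinAt)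
      (Real.injOn_cos.mono Ioo_subset_Icc_self)]
  refine setIntegral_congr_fun measurableSet_Ioo fun θ hθ => ?_
  have hsin : 0 < Real.sin θ := Real.sin_pos_of_pos_of_lt_pi hθ.1 hθ.2
  rw [← Real.sin_sq, Real.sqrt_sq hsin.le, smul_eq_mul, abs_neg, abs_of_pos hsin]
  field_simp

theorem integral_zero_two_mul_eq_integral_add_reflect {E : Type*} [NormedAddCommGroup E]
    [NormedSpace ℝ E] {h : ℝ → E} {c : ℝ} (hh : IntervalIntegrable h volume 0 (2 * c)) :
    ∫ θ in (0 : ℝ)..2 * c, h θ = ∫ θ in (0 : ℝ)..c, (h θ + h (2 * c - θ)) := by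
  have hc : c ∈ uIcc 0 (2 * c) := by
    rcases le_total 0 c with h0 | h0
    · exact mem_uIcc.2 (Or.inl ⟨h0, by linarith⟩)
    · exact mem_uIcc.2 (Or.inr ⟨by linarith, h0⟩)
  have hleft : IntervalIntegrable h volume 0 c := hh.mono_set (uIcc_subset_uIcc_left hc)
  have hright : IntervalIntegrable h volume c (2 * c) := hh.mono_set (uIcc_subset_uIcc_right hc)
  have hreflect : IntervalIntegrable (fun θ => h (2 * c - θ)) volume 0 c := by
    simpa [two_mul] using (hright.comp_sub_left (2 * c)).symm
  rw [← integral_add_adjacent_intervals hleft hright, integral_add hleft hreflect,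
    integral_comp_sub_left]
  ring_nf

theorem joukowski_exp_mul_I (θ : ℝ) :
    (Complex.exp (θ * I) + (Complex.exp (θ * I))⁻¹) / 2 = Real.cos θ := by
  rw [← Complex.exp_neg, ← neg_mul, Complex.ofReal_cos, Complex.cos]

theorem integral_mul_exp_neg_eq_two_mul_integral_mul_cos {φ : ℝ → ℂ}
    (hφ : IntervalIntegrable φ volume 0 (2 * π)) (hsymm : ∀ θ, φ (2 * π - θ) = φ θ) (k : ℤ) :
    ∫ θ in (0 : ℝ)..2 * π, φ θ * Complex.exp (-(k * θ) * I) =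
      2 * ∫ θ in (0 : ℝ)..π, φ θ * Real.cos (k * θ) := by
  rw [integral_zero_two_mul_eq_integral_add_reflect
      (hφ.mul_continuousOn (by fun_prop)), ← intervalIntegral.integral_const_mul]
  refine integral_congr fun θ _ => ?_
  have hperiod : Complex.exp (-(k * (2 * π - θ) : ℂ) * I) = Complex.exp (k * θ * I) := by
    rw [show -(k * (2 * π - θ) : ℂ) * I = k * θ * I + (-k : ℤ) * (2 * π * I) by push_cast; ring,
      Complex.exp_add, Complex.exp_int_mul_two_pi_mul_I, mul_one]
  simp only [hsymm]
  push_cast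
  rw [hperiod, Complex.cos]
  ring_nf

theorem circleIntegral_unit_mul_zpow_neg_succ_eq_integral (F : ℂ → ℂ) (k : ℤ) :
    (∮ z in C(0, 1), F z * z ^ (-(k + 1))) =
      I * ∫ θ in (0 : ℝ)..2 * π, F (Complex.exp (θ * I)) * Complex.exp (-(k * θ) * I) := by
  rw [circleIntegral, ← intervalIntegral.integral_const_mul]
  refine intervalIntegral.integral_congr fun θ _ => ?_
  rw [deriv_circleMap, circleMap_zero_zpow, smul_eq_mul]
  simp only [circleMap_zero, one_zpow, Complex.ofReal_one, one_mul]
  rw [show -(k * θ : ℂ) * I = θ * I + ((-(k + 1) : ℤ) * θ : ℝ) * I by push_cast; ring,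
    Complex.exp_add]
  ring

theorem norm_integral_mul_exp_neg_le_of_differentiableOn_annulus {F : ℂ → ℂ} {r M : ℝ} (k : ℤ)
    (hr : 1 ≤ r) (hF : DifferentiableOn ℂ F (closedBall 0 r \ ball 0 1))
    (hM : ∀ z ∈ sphere (0 : ℂ) r, ‖F z‖ ≤ M) :
    ‖∫ θ in (0 : ℝ)..2 * π, F (Complex.exp (θ * I)) * Complex.exp (-(k * θ) * I)‖ ≤
      2 * π * M / r ^ k := by
  set g : ℂ → ℂ := fun z => F z * z ^ (-(k + 1))
  have hg : DifferentiableOn ℂ g (closedBall 0 r \ ball 0 1) := by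
    refine hF.mul fun z hz => (differentiableAt_zpow.2 (Or.inl ?_)).differentiableWithinAt
    rintro rfl
    simpa using hz.2
  have hcauchy : (∮ z in C(0, r), g z) = ∮ z in C(0, 1), g z :=
    Complex.circleIntegral_eq_of_differentiable_on_annulus_off_countable one_pos hr
      countable_empty hg.continuousOn fun z hz =>
        hg.differentiableAt <| Filter.mem_of_superset
          ((isOpen_ball.sdiff isClosed_closedBall).mem_nhds hz.1)
          (sdiff_subset_sdiff ball_subset_closedBall ball_subset_closedBall)
  have hbound : ‖∮ z in C(0, r), g z‖ ≤ 2 * π * r * (M * r ^ (-(k + 1))) := by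
    refine circleIntegral.norm_integral_le_of_norm_le_const (by linarith) fun z hz => ?_
    rw [mem_sphere_zero_iff_norm] at hz
    rw [norm_mul, norm_zpow, hz]
    exact mul_le_mul_of_nonneg_right (hM z (mem_sphere_zero_iff_norm.2 hz)) (by positivity)
  rw [hcauchy, circleIntegral_unit_mul_zpow_neg_succ_eq_integral, norm_mul, Complex.norm_I,
    one_mul] at hbound
  calc _ ≤ 2 * π * r * (M * r ^ (-(k + 1))) := hbound
    _ = 2 * π * M / r ^ k := by
      rw [zpow_neg, zpow_add_one₀ (by positivity)]
      field_simp

theorem differentiableOn_comp_joukowski {f : ℂ → ℂ} {ρ : ℝ}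
    (hf : DifferentiableOn ℂ f (bernsteinEllipse ρ)) :
    DifferentiableOn ℂ (fun z => f ((z + z⁻¹) / 2)) {z : ℂ | ρ⁻¹ < ‖z‖ ∧ ‖z‖ < ρ} := by
  refine hf.comp (fun z hz => ?_) fun z hz => mem_image_of_mem _ hz
  have hz0 : z ≠ 0 := by
    rintro rfl
    simp only [mem_ofPred_eq, norm_zero, inv_neg''] at hz
    linarith [hz.1, hz.2]
  exact ((differentiableAt_id.add (differentiableAt_inv hz0)).div_const 2).differentiableWithinAt

theorem stmt13_general (ρ M : ℝ) (hρ : 1 < ρ)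
    (f : ℂ → ℂ)
    (hf : DifferentiableOn ℂ f (bernsteinEllipse ρ))
    (hM : ∀ z ∈ bernsteinEllipse ρ, ‖f z‖ ≤ M)
    (a : ℕ → ℝ)
    (ha : ∀ k : ℕ, a k = (2 / π) *
      ∫ x in (-1 : ℝ)..1,
        (f x).re * (Polynomial.Chebyshev.T ℝ k).eval x / Real.sqrt (1 - x ^ 2)) :
    ∀ k : ℕ, 1 ≤ k → |a k| ≤ 2 * M / ρ ^ k := by
  intro k _
  have hfJ := differentiableOn_comp_joukowski hf
  have hcircle (θ : ℝ) : Complex.exp (θ * I) ∈ {z : ℂ | ρ⁻¹ < ‖z‖ ∧ ‖z‖ < ρ} := by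
    simp [Complex.norm_exp_ofReal_mul_I, inv_lt_one_of_one_lt₀ hρ, hρ]
  have hcos : Continuous fun θ : ℝ => f (Real.cos θ) := by
    simpa only [Function.comp_def, joukowski_exp_mul_I] using
      hfJ.continuousOn.comp_continuous (by fun_prop) hcircle
  set J := ∫ θ in (0 : ℝ)..π, f (Real.cos θ) * Real.cos (k * θ)
  have hak : a k = 2 / π * J.re := by
    have hJint : IntervalIntegrable (fun θ : ℝ => f (Real.cos θ) * Real.cos (k * θ)) volume 0 π :=
      (hcos.mul (by fun_prop : Continuous fun θ : ℝ => (Real.cos (k * θ) : ℂ))).intervalIntegrable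
        _ _
    rw [ha k, integral_div_sqrt_one_sub_sq_eq_integral_comp_cos, ← reCLM_apply]
    simp only [J]
    rw [← reCLM.intervalIntegral_comp_comm hJint]
    congr 1
    refine integral_congr fun θ _ => ?_
    simp only [reCLM_apply, Complex.re_mul_ofReal, Polynomial.Chebyshev.T_real_cos,
      Int.cast_natCast]
  have hJ (r : ℝ) (hr : r ∈ Ioo 1 ρ) : ‖J‖ ≤ π * M / r ^ k := by
    have hannulus : closedBall (0 : ℂ) r \ ball 0 1 ⊆ {z : ℂ | ρ⁻¹ < ‖z‖ ∧ ‖z‖ < ρ} :=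
      fun z ⟨hzr, hz1⟩ => by
        simp only [mem_closedBall_zero_iff, mem_ball_zero_iff, not_lt] at hzr hz1
        exact ⟨(inv_lt_one_of_one_lt₀ hρ).trans_le hz1, hzr.trans_lt hr.2⟩
    have := norm_integral_mul_exp_neg_le_of_differentiableOn_annulus k hr.1.le
      (hfJ.mono hannulus) fun z hz => hM _ ⟨z, hannulus ⟨sphere_subset_closedBall hz,
        by simpa [mem_sphere_zero_iff_norm.1 hz] using hr.1.le⟩, rfl⟩
    simp only [joukowski_exp_mul_I] at this
    rw [integral_mul_exp_neg_eq_two_mul_integral_mul_cos (hcos.intervalIntegrable _ _)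
      (fun θ => by rw [Real.cos_two_pi_sub]), norm_mul, Complex.norm_two, Int.cast_natCast,
      zpow_natCast, mul_assoc, mul_div_assoc] at this
    linarith
  have hbound (r : ℝ) (hr : r ∈ Ioo 1 ρ) : |a k| ≤ 2 * M / r ^ k := by
    have hr0 : 0 < r := one_pos.trans hr.1
    calc |a k| = 2 / π * |J.re| := by rw [hak, abs_mul, abs_of_pos (by positivity)]
      _ ≤ 2 / π * ‖J‖ := by gcongr; exact Complex.abs_re_le_norm J
      _ ≤ 2 / π * (π * M / r ^ k) := by gcongr; exact hJ r hr
      _ = 2 * M / r ^ k := by field_simp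
  have hcont : ContinuousAt (fun r : ℝ => 2 * M / r ^ k) ρ :=
    continuousAt_const.div (continuousAt_pow ρ k) (by positivity)
  exact ge_of_tendsto (hcont.tendsto.mono_left nhdsWithin_le_nhds)
    (Filter.eventually_of_mem (Ioo_mem_nhdsLT hρ) hbound)

/-- Bernstein's theorem: if `f` is analytic and bounded by `M` on the
Bernstein ρ-ellipse (`ρ > 1`) and is real-valued on `[−1,1]`, then its
Chebyshev coefficients `a_k = (2/π)∫_{−1}^1 f(x)T_k(x)/√(1−x²) dx` satisfy
`|a_k| ≤ 2M·ρ^{−k}` for all `k ≥ 1`. -/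
theorem stmt13 (ρ M : ℝ) (hρ : 1 < ρ)
    (f : ℂ → ℂ)
    (hf : DifferentiableOn ℂ f (bernsteinEllipse ρ))
    (hM : ∀ z ∈ bernsteinEllipse ρ, ‖f z‖ ≤ M)
    (hreal : ∀ x : ℝ, x ∈ Set.Icc (-1 : ℝ) 1 → (f x).im = 0)
    (a : ℕ → ℝ)
    (ha : ∀ k : ℕ, a k = (2 / π) *
      ∫ x in (-1 : ℝ)..1,
        (f x).re * (Polynomial.Chebyshev.T ℝ k).eval x / Real.sqrt (1 - x ^ 2)) :
    ∀ k : ℕ, 1 ≤ k → |a k| ≤ 2 * M / ρ ^ k :=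
  stmt13_general ρ M hρ f hf hM a ha
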